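/- Let μ², λ, λ₁, …, λ₇, κ, β, v, ξ be real parameters with v > 0, m² := −2μ² + κv² + βv⁴ > 0, set m := √(−2μ² + κv² + βv⁴), assume κ + 2βv² ≠ 0, and let A ∈ ℝ satisfy A² = [8(2μ² − κv² − βv⁴) − 4λv²ξ² + 4λv⁴]/(κ + 2βv²). Suppose the three algebraic conditions hold: (λ₃ + 6λ₄ + 36λ₅)A⁴ − (48λ₆ + 8λ₇)v²A² + 48βv⁴ = 0; 12m² + (6λ₁ + λ₂)A² − 6κv² + (6λ₆ + λ₇)v²A² − 12βv⁴ = 0; and 72λv⁴ + (6λ₆ + λ₇)A⁴ − 24βv²A² = 0. Then φ(y) = v·tanh(my) and χ(y) = A·sech(my) satisfy, for all y ∈ ℝ, the coupled system φ''(y) = λφ(φ² − v²)(φ² − ξ²) + (λ/2)φ(φ² − v²)² + (κ/4)φχ² + ((6λ₆ + λ₇)/48)φχ⁴ + (β/2)φ³χ² and χ''(y) = −2μ²χ + (λ₁ + λ₂/6)χ³ + ((λ₃ + 6λ₄ + 36λ₅)/48)χ⁵ + κφ²χ + ((6λ₆ + λ₇)/6)φ²χ³ + βφ⁴χ. -/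

import Mathlib

/-!
Write `t = tanh (m y)` and `s = sech (m y)`, so that `s² + t² = 1`, `t' = m s²` and
`s' = -m s t`. Then `(v t)'' = -2 v m² t s²` and `(A s)'' = A m² s (1 - 2 s²)`, and both
field equations become polynomial identities in `s` and `t`. Modulo `s² + t² = 1` they are
linear combinations of `m² = -2μ² + κv² + βv⁴`, the equation for `A²` and the three
algebraic conditions.
-/

open Real

namespace Real

lemma inv_cosh_sq_add_tanh_sq (x : ℝ) : (cosh x)⁻¹ ^ 2 + tanh x ^ 2 = 1 := by
  rw [tanh_eq_sinh_div_cosh]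
  field_simp
  linear_combination -cosh_sq_sub_sinh_sq x

lemma hasDerivAt_tanh (x : ℝ) : HasDerivAt tanh ((cosh x)⁻¹ ^ 2) x := by
  have h := (hasDerivAt_sinh x).div (hasDerivAt_cosh x) (cosh_pos x).ne'
  rw [show tanh = fun y => sinh y / cosh y from funext tanh_eq_sinh_div_cosh]
  refine h.congr_deriv ?_
  field_simp
  linear_combination cosh_sq_sub_sinh_sq x

lemma hasDerivAt_inv_cosh (x : ℝ) :
    HasDerivAt (fun y => (cosh y)⁻¹) (-((cosh x)⁻¹ * tanh x)) x := by
  refine ((hasDerivAt_cosh x).inv (cosh_pos x).ne').congr_deriv ?_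
  rw [tanh_eq_sinh_div_cosh]
  ring

end Real

section ScaledProfiles

variable (m : ℝ)

lemma hasDerivAt_tanh_const_mul (y : ℝ) :
    HasDerivAt (fun y => tanh (m * y)) (m * (cosh (m * y))⁻¹ ^ 2) y := by
  refine ((hasDerivAt_tanh (m * y)).comp y ((hasDerivAt_id y).const_mul m)).congr_deriv ?_
  simp only [mul_one]
  ring

lemma hasDerivAt_inv_cosh_const_mul (y : ℝ) :
    HasDerivAt (fun y => (cosh (m * y))⁻¹) (-(m * ((cosh (m * y))⁻¹ * tanh (m * y)))) y := by
  refine ((hasDerivAt_inv_cosh (m * y)).comp y ((hasDerivAt_id y).const_mul m)).congr_deriv ?_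
  simp only [mul_one]
  ring

lemma deriv_deriv_tanh_const_mul (y : ℝ) :
    deriv (deriv fun y => tanh (m * y)) y
      = -2 * m ^ 2 * tanh (m * y) * (cosh (m * y))⁻¹ ^ 2 := by
  have hderiv : deriv (fun y => tanh (m * y)) = fun y => m * (cosh (m * y))⁻¹ ^ 2 :=
    funext fun y => (hasDerivAt_tanh_const_mul m y).deriv
  have h : HasDerivAt (fun y => m * (cosh (m * y))⁻¹ ^ 2)
      (m * (2 * (cosh (m * y))⁻¹ ^ 1 * -(m * ((cosh (m * y))⁻¹ * tanh (m * y))))) y := by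
    exact_mod_cast ((hasDerivAt_inv_cosh_const_mul m y).pow 2).const_mul m
  rw [hderiv, h.deriv]
  ring

lemma deriv_deriv_inv_cosh_const_mul (y : ℝ) :
    deriv (deriv fun y => (cosh (m * y))⁻¹) y
      = m ^ 2 * (cosh (m * y))⁻¹ * (1 - 2 * (cosh (m * y))⁻¹ ^ 2) := by
  have hderiv : deriv (fun y => (cosh (m * y))⁻¹)
      = fun y => -(m * ((cosh (m * y))⁻¹ * tanh (m * y))) :=
    funext fun y => (hasDerivAt_inv_cosh_const_mul m y).deriv
  have h : HasDerivAt (fun y => -(m * ((cosh (m * y))⁻¹ * tanh (m * y))))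
      (m ^ 2 * (cosh (m * y))⁻¹ * (1 - 2 * (cosh (m * y))⁻¹ ^ 2)) y := by
    refine (((hasDerivAt_inv_cosh_const_mul m y).mul
      (hasDerivAt_tanh_const_mul m y)).const_mul m).neg.congr_deriv ?_
    linear_combination (m ^ 2 * (cosh (m * y))⁻¹) * inv_cosh_sq_add_tanh_sq (m * y)
  rw [hderiv, h.deriv]

end ScaledProfiles

lemma kink_equation_of_sq_add_sq (μ2 lam l6 l7 κ β v ξ m A t s : ℝ) (hts : s ^ 2 + t ^ 2 = 1)
    (hm2 : m ^ 2 = -2 * μ2 + κ * v ^ 2 + β * v ^ 4)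
    (hA : A ^ 2 * (κ + 2 * β * v ^ 2) = 8 * (2 * μ2 - κ * v ^ 2 - β * v ^ 4)
      - 4 * lam * v ^ 2 * ξ ^ 2 + 4 * lam * v ^ 4)
    (hcond3 : 72 * lam * v ^ 4 + (6 * l6 + l7) * A ^ 4 - 24 * β * v ^ 2 * A ^ 2 = 0) :
    -2 * m ^ 2 * (v * t) * s ^ 2
      = lam * (v * t) * ((v * t) ^ 2 - v ^ 2) * ((v * t) ^ 2 - ξ ^ 2)
        + (lam / 2) * (v * t) * ((v * t) ^ 2 - v ^ 2) ^ 2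
        + (κ / 4) * (v * t) * (A * s) ^ 2
        + ((6 * l6 + l7) / 48) * (v * t) * (A * s) ^ 4
        + (β / 2) * (v * t) ^ 3 * (A * s) ^ 2 := by
  linear_combination (-(1/4) * v * t * s ^ 2) * hA + (-2 * v * t * s ^ 2) * hm2
    + (-(1/48) * v * t * s ^ 4) * hcond3
    + (lam * t * v ^ 3 * ξ ^ 2 + (1/2) * lam * t * v ^ 5 + (3/2) * lam * t * s ^ 2 * v ^ 5
      - (1/2) * β * t * s ^ 2 * A ^ 2 * v ^ 3 - (3/2) * lam * t ^ 3 * v ^ 5) * hts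

lemma bump_equation_of_sq_add_sq (μ2 l1 l2 l3 l4 l5 l6 l7 κ β v m A t s : ℝ)
    (hts : s ^ 2 + t ^ 2 = 1) (hm2 : m ^ 2 = -2 * μ2 + κ * v ^ 2 + β * v ^ 4)
    (hcond1 : (l3 + 6 * l4 + 36 * l5) * A ^ 4 - (48 * l6 + 8 * l7) * v ^ 2 * A ^ 2
      + 48 * β * v ^ 4 = 0)
    (hcond2 : 12 * m ^ 2 + (6 * l1 + l2) * A ^ 2 - 6 * κ * v ^ 2
      + (6 * l6 + l7) * v ^ 2 * A ^ 2 - 12 * β * v ^ 4 = 0) :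
    m ^ 2 * (A * s) * (1 - 2 * s ^ 2)
      = -2 * μ2 * (A * s) + (l1 + l2 / 6) * (A * s) ^ 3
        + ((l3 + 6 * l4 + 36 * l5) / 48) * (A * s) ^ 5
        + κ * (v * t) ^ 2 * (A * s)
        + ((6 * l6 + l7) / 6) * (v * t) ^ 2 * (A * s) ^ 3
        + β * (v * t) ^ 4 * (A * s) := by
  linear_combination (A * s) * hm2 + (-(1/6) * A * s ^ 3) * hcond2
    + (-(1/48) * A * s ^ 5) * hcond1
    + (-(κ * s * A * v ^ 2) - β * s * A * v ^ 4 + β * s ^ 3 * A * v ^ 4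
      - (1/6) * l7 * s ^ 3 * A ^ 3 * v ^ 2 - l6 * s ^ 3 * A ^ 3 * v ^ 2
      - β * t ^ 2 * s * A * v ^ 4) * hts

theorem sixth_order_domain_wall_solution_general
    (μ2 lam l1 l2 l3 l4 l5 l6 l7 κ β v ξ : ℝ)
    (hmass : 0 < -2 * μ2 + κ * v ^ 2 + β * v ^ 4)
    (m A : ℝ)
    (hm : m = Real.sqrt (-2 * μ2 + κ * v ^ 2 + β * v ^ 4))
    (hden : κ + 2 * β * v ^ 2 ≠ 0)
    (hA : A ^ 2 = (8 * (2 * μ2 - κ * v ^ 2 - β * v ^ 4) - 4 * lam * v ^ 2 * ξ ^ 2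
      + 4 * lam * v ^ 4) / (κ + 2 * β * v ^ 2))
    (hcond1 : (l3 + 6 * l4 + 36 * l5) * A ^ 4 - (48 * l6 + 8 * l7) * v ^ 2 * A ^ 2
      + 48 * β * v ^ 4 = 0)
    (hcond2 : 12 * m ^ 2 + (6 * l1 + l2) * A ^ 2 - 6 * κ * v ^ 2
      + (6 * l6 + l7) * v ^ 2 * A ^ 2 - 12 * β * v ^ 4 = 0)
    (hcond3 : 72 * lam * v ^ 4 + (6 * l6 + l7) * A ^ 4 - 24 * β * v ^ 2 * A ^ 2 = 0)
    (φ χ : ℝ → ℝ)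
    (hφ : ∀ y, φ y = v * Real.tanh (m * y))
    (hχ : ∀ y, χ y = A / Real.cosh (m * y)) :
    ∀ y : ℝ,
      deriv (deriv φ) y
        = lam * φ y * ((φ y) ^ 2 - v ^ 2) * ((φ y) ^ 2 - ξ ^ 2)
          + (lam / 2) * φ y * ((φ y) ^ 2 - v ^ 2) ^ 2
          + (κ / 4) * φ y * (χ y) ^ 2
          + ((6 * l6 + l7) / 48) * φ y * (χ y) ^ 4
          + (β / 2) * (φ y) ^ 3 * (χ y) ^ 2 ∧
      deriv (deriv χ) y
        = -2 * μ2 * χ y + (l1 + l2 / 6) * (χ y) ^ 3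
          + ((l3 + 6 * l4 + 36 * l5) / 48) * (χ y) ^ 5
          + κ * (φ y) ^ 2 * χ y
          + ((6 * l6 + l7) / 6) * (φ y) ^ 2 * (χ y) ^ 3
          + β * (φ y) ^ 4 * χ y := by
  intro y
  have hm2 : m ^ 2 = -2 * μ2 + κ * v ^ 2 + β * v ^ 4 := by rw [hm, sq_sqrt hmass.le]
  have hφ'' : deriv (deriv φ) y = v * deriv (deriv fun y => tanh (m * y)) y := by
    simp only [funext hφ, deriv_const_mul_field']
  have hχ'' : deriv (deriv χ) y = A * deriv (deriv fun y => (cosh (m * y))⁻¹) y := by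
    simp only [funext hχ, div_eq_mul_inv, deriv_const_mul_field']
  rw [hφ'', hχ'', deriv_deriv_tanh_const_mul, deriv_deriv_inv_cosh_const_mul, hφ, hχ,
    div_eq_mul_inv]
  have hts := inv_cosh_sq_add_tanh_sq (m * y)
  constructor
  · linear_combination kink_equation_of_sq_add_sq μ2 lam l6 l7 κ β v ξ m A _ _ hts hm2
      ((eq_div_iff hden).mp hA) hcond3
  · linear_combination bump_equation_of_sq_add_sq μ2 l1 l2 l3 l4 l5 l6 l7 κ β v m A _ _ hts
      hm2 hcond1 hcond2

/-- The sixth-order-potential domain-wall background of the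
SO(10) → SU(3)×SU(2)_L×SU(2)_R×U(1)_{B−L} model:
`φ(y) = v·tanh(my)`, `χ(y) = A·sech(my)` solve the static Euler–Lagrange equations. -/
theorem sixth_order_domain_wall_solution
    (μ2 lam l1 l2 l3 l4 l5 l6 l7 κ β v ξ : ℝ)
    (hv : 0 < v)
    (hmass : 0 < -2 * μ2 + κ * v ^ 2 + β * v ^ 4)
    (m A : ℝ)
    (hm : m = Real.sqrt (-2 * μ2 + κ * v ^ 2 + β * v ^ 4))
    (hden : κ + 2 * β * v ^ 2 ≠ 0)
    (hA : A ^ 2 = (8 * (2 * μ2 - κ * v ^ 2 - β * v ^ 4) - 4 * lam * v ^ 2 * ξ ^ 2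
      + 4 * lam * v ^ 4) / (κ + 2 * β * v ^ 2))
    (hcond1 : (l3 + 6 * l4 + 36 * l5) * A ^ 4 - (48 * l6 + 8 * l7) * v ^ 2 * A ^ 2
      + 48 * β * v ^ 4 = 0)
    (hcond2 : 12 * m ^ 2 + (6 * l1 + l2) * A ^ 2 - 6 * κ * v ^ 2
      + (6 * l6 + l7) * v ^ 2 * A ^ 2 - 12 * β * v ^ 4 = 0)
    (hcond3 : 72 * lam * v ^ 4 + (6 * l6 + l7) * A ^ 4 - 24 * β * v ^ 2 * A ^ 2 = 0)
    (φ χ : ℝ → ℝ)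
    (hφ : ∀ y, φ y = v * Real.tanh (m * y))
    (hχ : ∀ y, χ y = A / Real.cosh (m * y)) :
    ∀ y : ℝ,
      deriv (deriv φ) y
        = lam * φ y * ((φ y) ^ 2 - v ^ 2) * ((φ y) ^ 2 - ξ ^ 2)
          + (lam / 2) * φ y * ((φ y) ^ 2 - v ^ 2) ^ 2
          + (κ / 4) * φ y * (χ y) ^ 2
          + ((6 * l6 + l7) / 48) * φ y * (χ y) ^ 4
          + (β / 2) * (φ y) ^ 3 * (χ y) ^ 2 ∧
      deriv (deriv χ) y
        = -2 * μ2 * χ y + (l1 + l2 / 6) * (χ y) ^ 3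
          + ((l3 + 6 * l4 + 36 * l5) / 48) * (χ y) ^ 5
          + κ * (φ y) ^ 2 * χ y
          + ((6 * l6 + l7) / 6) * (φ y) ^ 2 * (χ y) ^ 3
          + β * (φ y) ^ 4 * χ y :=
  sixth_order_domain_wall_solution_general μ2 lam l1 l2 l3 l4 l5 l6 l7 κ β v ξ hmass m A hm hden hA
    hcond1 hcond2 hcond3 φ χ hφ hχ
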